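/- arXiv:2107.06121 — 2 statements merged into one kernel-verified Lean document; each statement's English description precedes it below -/
import Mathlib

section
/- A forest F whose node set is the set of hyperedges of a hypergraph H is a join forest of H if and only if the weight of F equals the weight w(H) of H. -/
/-!
Lemma 3.1(a) (Bernstein–Goodman): a hypergraph `H` is acyclic iff the weight `w(H)`
equals the weight of a maximum-weight spanning forest of the weighted hyperedge
graph `wg(H)`.

A hypergraph on a finite vertex type `V` is given by its finite set `E` of
hyperedges, each a `Finset V`.
-/

variable {V : Type*} [Fintype V] [DecidableEq V]

/-- The degree of a vertex `v`: the number of hyperedges containing `v`. -/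
def hdeg (E : Finset (Finset V)) (v : V) : ℕ := (E.filter (fun e => v ∈ e)).card

/-- The weight of a hypergraph: the sum, over non-isolated vertices, of (degree − 1). -/
def hweight (E : Finset (Finset V)) : ℕ :=
  ∑ v ∈ Finset.univ.filter (fun v => 1 ≤ hdeg E v), (hdeg E v - 1)

/-- The weighted hyperedge graph `wg(H)`: nodes are the hyperedges, two distinct
hyperedges are adjacent iff they intersect.  (The weight of an edge `(e, f)` is
`(e ∩ f).card`, see `fweight`.) -/
def wg (E : Finset (Finset V)) : SimpleGraph (Finset V) where
  Adj e f := e ∈ E ∧ f ∈ E ∧ e ≠ f ∧ (e ∩ f).Nonempty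
  symm := ⟨fun e f ⟨he, hf, hne, hi⟩ => ⟨hf, he, hne.symm, by rwa [Finset.inter_comm] at hi⟩⟩
  loopless := ⟨fun e h => h.2.2.1 rfl⟩

/-- The weight `|e ∩ f|` of an (unordered) pair of hyperedges. -/
def interWt : Sym2 (Finset V) → ℕ :=
  Sym2.lift ⟨fun a b => (a ∩ b).card, fun a b => by simp [Finset.inter_comm]⟩

/-- The weight of a forest (or any graph) on hyperedges: the sum over its edges
of the size of the intersection of the two endpoints. -/
noncomputable def fweight (F : SimpleGraph (Finset V)) : ℕ :=
  ∑ p ∈ (Set.toFinite F.edgeSet).toFinset, interWt p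

/-- `S` is a spanning forest of `G`: an acyclic subgraph with the same connected
components (in particular it contains all nodes of `G`). -/
def IsSpanningForest (G S : SimpleGraph (Finset V)) : Prop :=
  S ≤ G ∧ S.IsAcyclic ∧ ∀ a b, S.Reachable a b ↔ G.Reachable a b

/-- `S` is a maximum-weight spanning forest of `G`. -/
def IsMaxSpanningForest (G S : SimpleGraph (Finset V)) : Prop :=
  IsSpanningForest G S ∧ ∀ S', IsSpanningForest G S' → fweight S' ≤ fweight S

/-- A forest whose node set is the set of hyperedges of the hypergraph `E`. -/
def IsForestOn (E : Finset (Finset V)) (F : SimpleGraph (Finset V)) : Prop :=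
  F.IsAcyclic ∧ ∀ e f, F.Adj e f → e ∈ E ∧ f ∈ E

/-- A join forest of the hypergraph `E`: a forest on the hyperedges such that any
two hyperedges sharing a vertex `v` are connected, and every node on the (unique)
path between them contains `v`. -/
def IsJoinForest (E : Finset (Finset V)) (J : SimpleGraph (Finset V)) : Prop :=
  IsForestOn E J ∧
  ∀ e ∈ E, ∀ f ∈ E, ∀ v ∈ e, v ∈ f →
    J.Reachable e f ∧ ∀ p : J.Walk e f, p.IsPath → ∀ g ∈ p.support, v ∈ g

/-- A hypergraph is acyclic iff it has a join forest. -/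
def IsAcyclicHypergraph (E : Finset (Finset V)) : Prop := ∃ J, IsJoinForest E J

/-!
For a vertex `v`, let `F_v` be the subforest of `F` induced on the hyperedges containing `v`.
Counting each vertex of `e ∩ f` separately gives `weight F = ∑ v, |edges F_v|`, while
`w(H) = ∑ v, (deg v - 1)`. A forest on `deg v` nodes has at most `deg v - 1` edges, with
equality exactly when it is connected; and in a forest, `F_v` is connected exactly when the
unique path between any two hyperedges containing `v` stays inside `F_v`, which is the
join-forest condition at `v`.
-/

namespace SimpleGraph

section Forest

variable {W : Type*} [Finite W] {G : SimpleGraph W}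

lemma IsAcyclic.card_edgeSet_le (hG : G.IsAcyclic) : Nat.card G.edgeSet ≤ Nat.card W - 1 := by
  cases isEmpty_or_nonempty W
  · simp
  obtain ⟨T, hGT, -, hT⟩ :=
    connected_top.exists_isTree_le_of_le_of_isAcyclic (le_top : G ≤ ⊤) hG
  have hT_card := (isTree_iff_connected_and_card.mp hT).2
  have := Nat.card_mono T.edgeSet.toFinite (edgeSet_mono hGT)
  omega

lemma IsAcyclic.card_edgeSet_eq_iff (hG : G.IsAcyclic) :
    Nat.card G.edgeSet = Nat.card W - 1 ↔ G.Preconnected := by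
  cases isEmpty_or_nonempty W
  · simp [Preconnected]
  obtain ⟨T, hGT, -, hT⟩ :=
    connected_top.exists_isTree_le_of_le_of_isAcyclic (le_top : G ≤ ⊤) hG
  have hT_card := (isTree_iff_connected_and_card.mp hT).2
  constructor
  · intro hG_card
    have hGT_edges : G.edgeSet = T.edgeSet := by
      refine Set.eq_of_subset_of_ncard_le (edgeSet_mono hGT) ?_
      rw [← Nat.card_coe_set_eq, ← Nat.card_coe_set_eq]
      omega
    exact edgeSet_injective hGT_edges ▸ hT.connected.preconnected
  · intro hpre
    have := (isTree_iff_connected_and_card.mp ⟨⟨hpre⟩, hG⟩).2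
    omega

end Forest

lemma IsAcyclic.preconnected_induce_iff {α : Type*} {G : SimpleGraph α} (hG : G.IsAcyclic)
    {S : Set α} :
    (G.induce S).Preconnected ↔
      ∀ a ∈ S, ∀ b ∈ S, G.Reachable a b ∧ ∀ p : G.Walk a b, p.IsPath → ∀ x ∈ p.support, x ∈ S := by
  classical
  constructor
  · intro hS a ha b hb
    obtain ⟨q⟩ := hS ⟨a, ha⟩ ⟨b, hb⟩
    let q' : G.Path a b := (q.map (Embedding.induce S).toHom).toPath
    have hq' : ∀ x ∈ q'.1.support, x ∈ S := fun x hx => by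
      obtain ⟨y, -, rfl⟩ := List.mem_map.mp
        (Walk.support_map _ q ▸ Walk.support_toPath_subset_support _ hx)
      exact y.2
    refine ⟨⟨q'.1⟩, fun p hp => ?_⟩
    obtain rfl : p = q'.1 := congrArg Subtype.val ((hG.subsingleton_path a b).elim ⟨p, hp⟩ q')
    exact hq'
  · rintro h ⟨a, ha⟩ ⟨b, hb⟩
    obtain ⟨p⟩ := (h a ha b hb).1
    exact ⟨p.toPath.1.induce S ((h a ha b hb).2 _ p.toPath.2)⟩

end SimpleGraph

open Finset SimpleGraph

def hstar (E : Finset (Finset V)) (v : V) : Finset (Finset V) := E.filter (fun e => v ∈ e)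

omit [Fintype V] in
lemma nat_card_hstar (E : Finset (Finset V)) (v : V) :
    Nat.card (hstar E v : Set (Finset V)) = hdeg E v := by
  rw [Nat.card_coe_set_eq, Set.ncard_coe_finset, hstar, hdeg]

lemma hweight_eq_sum (E : Finset (Finset V)) : hweight E = ∑ v, (hdeg E v - 1) :=
  sum_filter_of_ne fun _ _ h => by omega

lemma interWt_eq_card_filter (p : Sym2 (Finset V)) : interWt p = #{v | ∀ e ∈ p, v ∈ e} := by
  induction p using Sym2.ind with
  | _ e f => exact congrArg card (by ext; simp)

lemma fweight_eq_sum_card_filter (F : SimpleGraph (Finset V)) [DecidableRel F.Adj] :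
    fweight F = ∑ v, #{p ∈ F.edgeFinset | ∀ e ∈ p, v ∈ e} := by
  calc fweight F = ∑ p ∈ F.edgeFinset, interWt p := sum_congr (by ext; simp) fun _ _ => rfl
    _ = ∑ v, #{p ∈ F.edgeFinset | ∀ e ∈ p, v ∈ e} := by
      simp only [interWt_eq_card_filter, card_filter]
      exact sum_comm

lemma fweight_eq_sum_card_edgeSet_induce {E : Finset (Finset V)} {F : SimpleGraph (Finset V)}
    (hF : ∀ e f, F.Adj e f → e ∈ E ∧ f ∈ E) :
    fweight F = ∑ v, Nat.card (F.induce (hstar E v : Set (Finset V))).edgeSet := by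
  classical
  rw [fweight_eq_sum_card_filter]
  refine sum_congr rfl fun v _ => ?_
  rw [Nat.card_eq_fintype_card, ← edgeFinset_card, ← card_filter_edgeFinset_toFinset_subset]
  refine congrArg card (filter_congr fun p hp => ?_)
  induction p using Sym2.ind with
  | _ e f =>
    have := hF e f (mem_edgeFinset.mp hp)
    simp [hstar, Finset.subset_iff, this]

omit [Fintype V] [DecidableEq V] in
lemma IsForestOn.mem_of_mem_support {E : Finset (Finset V)} {F : SimpleGraph (Finset V)}
    (hF : IsForestOn E F) {a b : Finset V} (p : F.Walk a b) (ha : a ∈ E) :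
    ∀ x ∈ p.support, x ∈ E := by
  induction p with
  | nil => simpa using ha
  | cons hadj p ih => simpa [ha] using ih (hF.2 _ _ hadj).2

omit [Fintype V] in
lemma isJoinForest_iff_forall_preconnected_induce_hstar {E : Finset (Finset V)}
    {F : SimpleGraph (Finset V)} (hF : IsForestOn E F) :
    IsJoinForest E F ↔ ∀ v, (F.induce (hstar E v : Set (Finset V))).Preconnected := by
  simp only [IsJoinForest, hF, true_and, hF.1.preconnected_induce_iff, hstar, coe_filter,
    Set.mem_ofPred_eq]
  constructor
  · rintro h v a ⟨ha, hva⟩ b ⟨hb, hvb⟩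
    obtain ⟨hab, hpaths⟩ := h a ha b hb v hva hvb
    exact ⟨hab, fun p hp x hx => ⟨hF.mem_of_mem_support p ha x hx, hpaths p hp x hx⟩⟩
  · intro h a ha b hb v hva hvb
    obtain ⟨hab, hpaths⟩ := h v a ⟨ha, hva⟩ b ⟨hb, hvb⟩
    exact ⟨hab, fun p hp x hx => (hpaths p hp x hx).2⟩

/-- A forest `F` whose node set is the set of hyperedges of a hypergraph `H` is a
join forest of `H` if and only if the weight of `F` equals the weight `w(H)` of `H`. -/
theorem isJoinForest_iff_weight_eq (E : Finset (Finset V)) (F : SimpleGraph (Finset V))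
    (hF : IsForestOn E F) :
    IsJoinForest E F ↔ fweight F = hweight E := by
  have hacyclic v : (F.induce (hstar E v : Set (Finset V))).IsAcyclic := hF.1.induce _
  have hle v : Nat.card (F.induce (hstar E v : Set (Finset V))).edgeSet ≤ hdeg E v - 1 :=
    nat_card_hstar E v ▸ (hacyclic v).card_edgeSet_le
  rw [isJoinForest_iff_forall_preconnected_induce_hstar hF,
    fweight_eq_sum_card_edgeSet_induce hF.2, hweight_eq_sum,
    sum_eq_sum_iff_of_le fun v _ => hle v]
  simp only [mem_univ, true_implies, ← (hacyclic _).card_edgeSet_eq_iff, nat_card_hstar]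
end

section
/- (Deletion step of Theorem 3.2) Let H = (V, E) be a hypergraph, let e ∈ E, and let S be a maximum-weight spanning forest of wg(H) satisfying Invariant (★); let d be the degree of the node e in S. Then there exists a maximum-weight spanning forest S' of wg((V, E \ {e})) satisfying Invariant (★) such that the symmetric difference of S and S' contains at most 2·d edges. -/
/-!
Lemma 3.1(a) (Bernstein–Goodman): a hypergraph `H` is acyclic iff the weight `w(H)`
equals the weight of a maximum-weight spanning forest of the weighted hyperedge
graph `wg(H)`.

A hypergraph on a finite vertex type `V` is given by its finite set `E` of
hyperedges, each a `Finset V`.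
-/

variable {V : Type*} [Fintype V] [DecidableEq V]

/-- Invariant (★): for every hyperedge `e` and every nonempty `A ⊆ e`, the forest
`S` has at most two edges `(e, f)` with `e ∩ f = A`. -/
def InvariantStar (E : Finset (Finset V)) (S : SimpleGraph (Finset V)) : Prop :=
  ∀ e ∈ E, ∀ A : Finset V, A.Nonempty → A ⊆ e →
    {f : Finset V | S.Adj e f ∧ e ∩ f = A}.ncard ≤ 2

/-!
Removing the edges of `S` at `e` leaves a forest `S₀` of `wg(H - e)`. Some maximum-weight
spanning forest `T` of `wg(H - e)` contains `S₀`: if an edge `ab` of `S₀` is missing from an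
optimal `T`, the `T`-path from `a` to `b` crosses the cut of `S - ab` along an edge `xy`, which
is no heavier than `ab` because `S - ab + xy` is a spanning forest of `wg(H)`; so `T - xy + ab`
is again optimal and shares one more edge with `S₀`.

Among these forests take one minimising `∑_{g, A} deg_A(g)²`, where `deg_A(g)` counts the
forest edges `gf` labelled `g ∩ f = A`. If `deg_A(g) ≥ 3`, one of these edges, `gf`, is not in
`S`, since `S` satisfies (★). Following another `A`-labelled edge of `g` to a leaf `x` of the
`A`-labelled subforest of `T - gf`, the forest `T - gf + xf` is again spanning, and
optimality of `T` forces `x ∩ f = A`; this lowers `deg_A(g)` by one and raises only `deg_A(x)`,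
from `1` to `2`, so the potential drops.

Finally `S₀ ⊆ T` and `|T| ≤ |S|` give `|S Δ T| ≤ 2 |S \ S₀| = 2d`.
-/

namespace SimpleGraph

variable {W : Type*} {F G H : SimpleGraph W}

theorem Reachable.of_forall_adj (h : ∀ ⦃u v⦄, G.Adj u v → H.Reachable u v) {a b : W}
    (hab : G.Reachable a b) : H.Reachable a b := by
  obtain ⟨p⟩ := hab
  induction p with
  | nil => rfl
  | cons hadj _ ih => exact (h hadj).trans ih

theorem Reachable.deleteEdges_or {a b v : W} (hv : F.Reachable a v) :
    (F.deleteEdges {s(a, b)}).Reachable a v ∨ (F.deleteEdges {s(a, b)}).Reachable b v := by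
  set F₀ := F.deleteEdges {s(a, b)}
  have hstep : ∀ ⦃u w⦄, F.Adj u w → F₀.Reachable a u ∨ F₀.Reachable b u →
      F₀.Reachable a w ∨ F₀.Reachable b w := by
    intro u w hadj hu
    by_cases huw : s(u, w) = s(a, b)
    · rcases Sym2.eq_iff.mp huw with ⟨-, hw⟩ | ⟨-, hw⟩
      · exact Or.inr (hw ▸ .rfl)
      · exact Or.inl (hw ▸ .rfl)
    · have : F₀.Reachable u w := (deleteEdges_adj.mpr ⟨hadj, huw⟩).reachable
      exact hu.imp (·.trans this) (·.trans this)
  suffices key : ∀ u (p : F.Walk u v), F₀.Reachable a u ∨ F₀.Reachable b u →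
      F₀.Reachable a v ∨ F₀.Reachable b v from key a hv.some (Or.inl .rfl)
  intro u p
  clear hv
  induction p with
  | nil => exact id
  | cons hadj _ ih => exact fun hu => ih (hstep hadj hu)

theorem IsAcyclic.not_reachable_deleteEdges (hF : F.IsAcyclic) {x y : W} (h : F.Adj x y) :
    ¬(F.deleteEdges {s(x, y)}).Reachable x y :=
  isBridge_iff.mp (isAcyclic_iff_forall_adj_isBridge.mp hF h)

theorem Walk.IsTrail.reachable_deleteEdges_of_mem_darts {a b x y : W} {p : G.Walk a b}
    (hp : p.IsTrail) {hxy : G.Adj x y} (hd : ⟨(x, y), hxy⟩ ∈ p.darts) :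
    (G.deleteEdges {s(x, y)}).Reachable a x ∧ (G.deleteEdges {s(x, y)}).Reachable y b := by
  induction p with
  | nil => simp at hd
  | @cons u w b hadj q ih =>
    rw [Walk.isTrail_cons] at hp
    rw [Walk.darts_cons, List.mem_cons] at hd
    rcases hd with heq | hd
    · simp only [Dart.mk.injEq, Prod.mk.injEq] at heq
      obtain ⟨rfl, rfl⟩ := heq
      exact ⟨.rfl, reachable_deleteEdges_iff_exists_walk.mpr ⟨q, hp.2⟩⟩
    · have hne : s(u, w) ≠ s(x, y) := fun h => hp.2 (h ▸ List.mem_map_of_mem hd)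
      exact ⟨(deleteEdges_adj.mpr ⟨hadj, hne⟩).reachable.trans (ih hp.1 hd).1, (ih hp.1 hd).2⟩

theorem IsAcyclic.exchange (hF : F.IsAcyclic) {x y u v : W} (hxy : F.Adj x y) (huv : u ≠ v)
    (hxu : (F.deleteEdges {s(x, y)}).Reachable x u)
    (hyv : (F.deleteEdges {s(x, y)}).Reachable y v) :
    (F.deleteEdges {s(x, y)} ⊔ edge u v).IsAcyclic ∧
      (F.deleteEdges {s(x, y)} ⊔ edge u v).Reachable = F.Reachable := by
  set F₀ := F.deleteEdges {s(x, y)}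
  have hF₀ : F₀ ≤ F := deleteEdges_le _
  have hF₀uv : ¬F₀.Reachable u v := fun h =>
    hF.not_reachable_deleteEdges hxy (hxu.trans (h.trans hyv.symm))
  have hedge : (F₀ ⊔ edge u v).Adj u v := Or.inr ((edge_adj ..).mpr ⟨Or.inl ⟨rfl, rfl⟩, huv⟩)
  refine ⟨(hF.anti hF₀).sup_edge_of_not_reachable hF₀uv, ?_⟩
  ext a b
  constructor
  · refine Reachable.of_forall_adj fun p q hpq => ?_
    rcases hpq with hpq | hpq
    · exact (hF₀ hpq).reachable
    · obtain ⟨⟨rfl, rfl⟩ | ⟨rfl, rfl⟩, -⟩ := (edge_adj ..).mp hpq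
      · exact (hxu.symm.mono hF₀).trans (hxy.reachable.trans (hyv.mono hF₀))
      · exact (hyv.symm.mono hF₀).trans (hxy.symm.reachable.trans (hxu.mono hF₀))
  · refine Reachable.of_forall_adj fun p q hpq => ?_
    by_cases hpq' : s(p, q) = s(x, y)
    · have hxy' : (F₀ ⊔ edge u v).Reachable x y :=
        (hxu.mono le_sup_left).trans (hedge.reachable.trans (hyv.symm.mono le_sup_left))
      rcases Sym2.eq_iff.mp hpq' with ⟨rfl, rfl⟩ | ⟨rfl, rfl⟩
      · exact hxy'
      · exact hxy'.symm
    · exact (le_sup_left (b := edge u v) (deleteEdges_adj.mpr ⟨hpq, hpq'⟩)).reachable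

theorem deleteEdges_sup_edge_of_adj {x y : W} (h : F.Adj x y) :
    F.deleteEdges {s(x, y)} ⊔ edge x y = F := by
  refine le_antisymm (sup_le (deleteEdges_le _) ((edge_le_iff _).mpr (Or.inr h)))
    fun u v huv => ?_
  by_cases he : s(u, v) = s(x, y)
  · exact Or.inr ((edge_adj ..).mpr ⟨Sym2.eq_iff.mp he, huv.ne⟩)
  · exact Or.inl (deleteEdges_adj.mpr ⟨huv, he⟩)

theorem edgeSet_deleteEdges_sup_edge {x y u v : W} (huv : u ≠ v) :
    (F.deleteEdges {s(x, y)} ⊔ edge u v).edgeSet = insert s(u, v) (F.edgeSet \ {s(x, y)}) := by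
  rw [edgeSet_sup, edgeSet_deleteEdges, edgeSet_edge_of_ne huv, Set.union_singleton]

theorem IsAcyclic.ncard_edgeSet_le [Finite W] (hF : F.IsAcyclic) (hG : G.IsAcyclic)
    (h : ∀ ⦃u v⦄, F.Adj u v → G.Reachable u v) : F.edgeSet.ncard ≤ G.edgeSet.ncard := by
  induction hn : (F.edgeSet \ G.edgeSet).ncard using Nat.strong_induction_on generalizing G with
  | _ n ih =>
  by_cases hsub : F.edgeSet ⊆ G.edgeSet
  · exact Set.ncard_le_ncard hsub
  obtain ⟨e, heF, heG⟩ := Set.not_subset.mp hsub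
  induction e using Sym2.ind with | _ a b => ?_
  have hab : F.Adj a b := heF
  obtain ⟨p, hp⟩ := (h hab).exists_isPath
  -- an edge of the `G`-path from `a` to `b` outside `F` is exchanged for `ab`
  obtain ⟨⟨⟨x, y⟩, hxy⟩, hd, hxyF⟩ : ∃ d ∈ p.darts, s(d.fst, d.snd) ∉ F.edgeSet := by
    by_contra! hall
    refine hF.not_reachable_deleteEdges hab (reachable_deleteEdges_iff_exists_walk.mpr
      ⟨p.transfer F fun r hr => ?_, by
        rw [Walk.edges_transfer]; exact fun h => heG (p.edges_subset_edgeSet h)⟩)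
    obtain ⟨d, hd, rfl⟩ := List.mem_map.mp hr
    exact hall d hd
  obtain ⟨hax, hyb⟩ := hp.isTrail.reachable_deleteEdges_of_mem_darts hd
  obtain ⟨hG', hreach⟩ := hG.exchange hxy hab.ne hax.symm hyb
  have hedges := edgeSet_deleteEdges_sup_edge (F := G) (x := x) (y := y) hab.ne
  have hcard : (G.deleteEdges {s(x, y)} ⊔ edge a b).edgeSet.ncard = G.edgeSet.ncard := by
    rw [hedges, Set.ncard_exchange heG hxy]
  refine hcard ▸ ih _ ?_ hG' (fun u v huv => hreach ▸ h huv) rfl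
  rw [← hn, hedges]
  have hsubset : F.edgeSet \ insert s(a, b) (G.edgeSet \ {s(x, y)}) ⊆
      F.edgeSet \ G.edgeSet := fun r hr =>
    ⟨hr.1, fun hrG => hr.2 (Set.mem_insert_of_mem _ ⟨hrG, fun hrd => hxyF (hrd ▸ hr.1)⟩)⟩
  exact Set.ncard_lt_ncard ((Set.ssubset_iff_of_subset hsubset).mpr
    ⟨s(a, b), ⟨heF, heG⟩, fun hr => hr.2 (Set.mem_insert _ _)⟩)

theorem IsAcyclic.exists_reachable_neighborSet_eq_singleton [Finite W] (hG : G.IsAcyclic)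
    {a b : W} (hab : G.Adj a b) :
    ∃ x z, G.Reachable a x ∧ x ≠ a ∧ G.neighborSet x = {z} := by
  have := Fintype.ofFinite W
  -- the far end of a longest path starting at `a`
  obtain ⟨n, ⟨x, p, hp, rfl⟩, hmax⟩ := Set.exists_max_image
    {n | ∃ x, ∃ p : G.Walk a x, p.IsPath ∧ p.length = n} id
    ((Set.finite_Iio (Fintype.card W)).subset fun n ⟨x, p, hp, hn⟩ => hn ▸ hp.length_lt)
    ⟨1, b, Walk.cons hab .nil, by simp [hab.ne], rfl⟩
  have hnil : ¬p.Nil := fun hnil =>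
    (hmax 1 ⟨b, Walk.cons hab .nil, by simp [hab.ne], rfl⟩).not_gt
      (by simp [hnil.length_eq_zero])
  refine ⟨x, p.penultimate, ⟨p⟩, fun hxa => hnil (hp.nil_iff_eq.mpr hxa.symm), ?_⟩
  ext z
  rw [mem_neighborSet, Set.mem_singleton_iff]
  refine ⟨fun hz => hG.eq_penultimate_of_adj_end hp hz ?_,
    fun hz => hz ▸ (p.adj_penultimate hnil).symm⟩
  by_contra hzp
  have := hmax _ ⟨z, p.concat hz, hp.concat hzp hz, rfl⟩
  simp [Walk.length_concat] at this

theorem ncard_neighborSet_sup [Finite W] (h : Disjoint F G) (v : W) :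
    ((F ⊔ G).neighborSet v).ncard = (F.neighborSet v).ncard + (G.neighborSet v).ncard := by
  rw [neighborSet_sup]
  refine Set.ncard_union_eq (Set.disjoint_left.mpr fun w hF hG => ?_)
  exact (disjoint_edgeSet.mpr h).ne_of_mem (F.mem_edgeSet.mpr hF) (G.mem_edgeSet.mpr hG) rfl

theorem ncard_symmDiff_edgeSet_le [Finite W] {S T P : SimpleGraph W}
    (hS : S.IsAcyclic) (hT : T.IsAcyclic) (hTS : ∀ ⦃u v⦄, T.Adj u v → S.Reachable u v)
    (hPS : P ≤ S) (hPT : P ≤ T) :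
    ((S.edgeSet \ T.edgeSet) ∪ (T.edgeSet \ S.edgeSet)).ncard ≤
      2 * (S.edgeSet \ P.edgeSet).ncard := by
  have hPS' := edgeSet_mono hPS
  have hPT' := edgeSet_mono hPT
  have h₁ : (S.edgeSet \ T.edgeSet).ncard ≤ (S.edgeSet \ P.edgeSet).ncard :=
    Set.ncard_le_ncard (Set.sdiff_subset_sdiff_right hPT')
  have h₂ : (T.edgeSet \ S.edgeSet).ncard ≤ (S.edgeSet \ P.edgeSet).ncard :=
    calc (T.edgeSet \ S.edgeSet).ncard
      _ ≤ (T.edgeSet \ P.edgeSet).ncard :=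
        Set.ncard_le_ncard (Set.sdiff_subset_sdiff_right hPS')
      _ = T.edgeSet.ncard - P.edgeSet.ncard := Set.ncard_sdiff hPT'
      _ ≤ S.edgeSet.ncard - P.edgeSet.ncard :=
        Nat.sub_le_sub_right (hT.ncard_edgeSet_le hS hTS) _
      _ = (S.edgeSet \ P.edgeSet).ncard := (Set.ncard_sdiff hPS').symm
  exact (Set.ncard_union_le _ _).trans (by omega)

end SimpleGraph

theorem Fintype.sum_lt_sum_of_eq_off_pair {ι M : Type*} [Fintype ι] [DecidableEq ι]
    [AddCommMonoid M] [PartialOrder M] [IsOrderedCancelAddMonoid M] {f g : ι → M} {a b : ι}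
    (hab : a ≠ b) (hoff : ∀ i, i ≠ a → i ≠ b → f i = g i) (hlt : f a + f b < g a + g b) :
    ∑ i, f i < ∑ i, g i := by
  rw [← Finset.sum_add_sum_compl {a, b} f, ← Finset.sum_add_sum_compl {a, b} g,
    Finset.sum_pair hab, Finset.sum_pair hab]
  refine add_lt_add_of_lt_of_le hlt (Finset.sum_congr rfl fun i hi => hoff i ?_ ?_).le <;>
    simp_all

open SimpleGraph

theorem fweight_deleteEdges_sup_edge {F : SimpleGraph (Finset V)} {x y u v : Finset V}
    (hxy : F.Adj x y) (huv : ¬F.Adj u v) (hne : u ≠ v) :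
    fweight (F.deleteEdges {s(x, y)} ⊔ edge u v) + interWt s(x, y) =
      fweight F + interWt s(u, v) := by
  have hfin : (Set.toFinite (F.deleteEdges {s(x, y)} ⊔ edge u v).edgeSet).toFinset =
      insert s(u, v) ((Set.toFinite F.edgeSet).toFinset.erase s(x, y)) := by
    ext r
    simp only [Set.Finite.mem_toFinset, edgeSet_deleteEdges_sup_edge hne, Finset.mem_insert,
      Finset.mem_erase, Set.mem_insert_iff, Set.mem_sdiff, Set.mem_singleton_iff]
    tauto
  have huv' : s(u, v) ∉ (Set.toFinite F.edgeSet).toFinset.erase s(x, y) := by simp [huv]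
  have hsum := Finset.sum_erase_add (Set.toFinite F.edgeSet).toFinset interWt
    (a := s(x, y)) (by simpa using hxy)
  rw [fweight, fweight, hfin, Finset.sum_insert huv', ← hsum]
  ring

omit [Fintype V] [DecidableEq V] in
theorem IsSpanningForest.exchange {G F : SimpleGraph (Finset V)} (hF : IsSpanningForest G F)
    {x y u v : Finset V} (hxy : F.Adj x y) (huv : G.Adj u v)
    (hxu : (F.deleteEdges {s(x, y)}).Reachable x u)
    (hyv : (F.deleteEdges {s(x, y)}).Reachable y v) :
    IsSpanningForest G (F.deleteEdges {s(x, y)} ⊔ edge u v) := by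
  obtain ⟨hacyc, hreach⟩ := hF.2.1.exchange hxy huv.ne hxu hyv
  exact ⟨sup_le ((deleteEdges_le _).trans hF.1) ((edge_le_iff _).mpr (Or.inr huv)), hacyc,
    fun a b => by rw [hreach]; exact hF.2.2 a b⟩

theorem exists_isMaxSpanningForest (G : SimpleGraph (Finset V)) :
    ∃ T, IsMaxSpanningForest G T := by
  obtain ⟨F, hFG, hF, hreach⟩ := G.exists_isAcyclic_reachable_eq_le
  obtain ⟨T, hT, hmax⟩ := Set.exists_max_image {T | IsSpanningForest G T} fweight
    (Set.toFinite _) ⟨F, hFG, hF, fun a b => by rw [hreach]⟩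
  exact ⟨T, hT, hmax⟩

theorem IsMaxSpanningForest.exists_adj_inf_le {G G' S T : SimpleGraph (Finset V)}
    (hS : IsMaxSpanningForest G S) (hG' : G' ≤ G) (hT : IsMaxSpanningForest G' T)
    {a b : Finset V} (hSab : S.Adj a b) (hG'ab : G'.Adj a b) (hTab : ¬T.Adj a b) :
    ∃ T', IsMaxSpanningForest G' T' ∧ T'.Adj a b ∧ T ⊓ S ≤ T' := by
  obtain ⟨p, hp⟩ := ((hT.1.2.2 a b).mpr hG'ab.reachable).exists_isPath
  set S₀ := S.deleteEdges {s(a, b)}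
  -- `p` leaves the side of `a` in `S - ab` along some edge `xy`
  obtain ⟨⟨⟨x, y⟩, hTxy⟩, hd, hx, hy⟩ := p.exists_boundary_dart {v | S₀.Reachable a v} .rfl
    (hS.1.2.1.not_reachable_deleteEdges hSab)
  change T.Adj x y at hTxy
  change S₀.Reachable a x at hx
  change ¬S₀.Reachable a y at hy
  have hSxy : ¬S.Adj x y := by
    intro h
    have hne : s(x, y) ≠ s(a, b) := fun he => hTab (by rw [← mem_edgeSet, ← he]; exact hTxy)
    exact hy (hx.trans (deleteEdges_adj.mpr ⟨h, hne⟩).reachable)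
  have hby : S₀.Reachable b y := by
    have hay : S.Reachable a y :=
      (hS.1.2.2 a y).mpr (((hT.1.2.2 a y).mp (hp.isTrail.reachable_deleteEdges_of_mem_darts hd
        |>.1.mono (deleteEdges_le _) |>.trans hTxy.reachable)).mono hG')
    exact hay.deleteEdges_or.resolve_left hy
  obtain ⟨hax, hyb⟩ := hp.isTrail.reachable_deleteEdges_of_mem_darts hd
  -- `S - ab + xy` shows that `xy` is not heavier than `ab`, so `T - xy + ab` is optimal
  have hwS := fweight_deleteEdges_sup_edge hSab hSxy hTxy.ne
  have hwT := fweight_deleteEdges_sup_edge hTxy hTab hSab.ne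
  have hS' := hS.2 _ (hS.1.exchange hSab (hG' (hT.1.1 hTxy)) hx hby)
  have hT' := hT.1.exchange hTxy hG'ab hax.symm hyb
  refine ⟨_, ⟨hT', fun T'' hT'' => (hT.2 T'' hT'').trans (by omega)⟩,
    Or.inr ((edge_adj ..).mpr ⟨Or.inl ⟨rfl, rfl⟩, hSab.ne⟩), fun u v ⟨hTuv, hSuv⟩ => ?_⟩
  exact Or.inl (deleteEdges_adj.mpr
    ⟨hTuv, fun he => hSxy (by rw [← mem_edgeSet, ← he]; exact hSuv)⟩)

theorem IsMaxSpanningForest.exists_le_of_le {G G' S P : SimpleGraph (Finset V)}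
    (hS : IsMaxSpanningForest G S) (hG' : G' ≤ G) (hPS : P ≤ S) (hPG' : P ≤ G') :
    ∃ T, IsMaxSpanningForest G' T ∧ P ≤ T := by
  obtain ⟨T, hT, hmin⟩ := Set.exists_min_image {T | IsMaxSpanningForest G' T}
    (fun T => (P.edgeSet \ T.edgeSet).ncard) (Set.toFinite _) (exists_isMaxSpanningForest G')
  refine ⟨T, hT, fun a b hab => ?_⟩
  by_contra hTab
  obtain ⟨T', hT', hT'ab, hle⟩ := hS.exists_adj_inf_le hG' hT (hPS hab) (hPG' hab) hTab
  have hsub : P.edgeSet \ T'.edgeSet ⊆ P.edgeSet \ T.edgeSet := fun r ⟨hrP, hrT'⟩ =>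
    ⟨hrP, fun hrT => hrT' (edgeSet_mono hle (by
      rw [edgeSet_inf]; exact ⟨hrT, edgeSet_mono hPS hrP⟩))⟩
  exact (hmin T' hT').not_gt (Set.ncard_lt_ncard ((Set.ssubset_iff_of_subset hsub).mpr
    ⟨s(a, b), ⟨hab, hTab⟩, fun h => h.2 hT'ab⟩))

/-- The edges `uv` of `T` labelled `u ∩ v = A`. Invariant (★) for `T` says that every hyperedge
has degree at most `2` in each `labelGraph T A`. -/
def labelGraph (T : SimpleGraph (Finset V)) (A : Finset V) : SimpleGraph (Finset V) where
  Adj u v := T.Adj u v ∧ u ∩ v = A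
  symm := ⟨fun u v h => ⟨h.1.symm, by rw [Finset.inter_comm]; exact h.2⟩⟩
  loopless := ⟨fun u h => T.loopless.irrefl u h.1⟩

omit [Fintype V] in
theorem labelGraph_le (T : SimpleGraph (Finset V)) (A : Finset V) : labelGraph T A ≤ T :=
  fun _ _ h => h.1

omit [Fintype V] in
theorem labelGraph_sup (T T' : SimpleGraph (Finset V)) (A : Finset V) :
    labelGraph (T ⊔ T') A = labelGraph T A ⊔ labelGraph T' A := by
  ext u v
  simp only [labelGraph, sup_adj, or_and_right]

theorem ncard_neighborSet_labelGraph_edge {a b : Finset V} (hab : a ≠ b) (A v : Finset V) :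
    ((labelGraph (edge a b) A).neighborSet v).ncard =
      if (v = a ∨ v = b) ∧ a ∩ b = A then 1 else 0 := by
  split_ifs with h
  · obtain ⟨hv | hv, rfl⟩ := h <;> subst hv
    · convert Set.ncard_singleton b
      ext w
      simp only [labelGraph, mem_neighborSet, edge_adj, Set.mem_singleton_iff]
      grind
    · convert Set.ncard_singleton a
      ext w
      simp only [labelGraph, mem_neighborSet, edge_adj, Set.mem_singleton_iff]
      grind [Finset.inter_comm]
  · refine (Set.ncard_eq_zero (Set.toFinite _)).mpr <|
      Set.eq_empty_of_forall_notMem fun w hw => h ?_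
    simp only [labelGraph, mem_neighborSet, edge_adj] at hw
    grind [Finset.inter_comm]

noncomputable def starPotential (T : SimpleGraph (Finset V)) : ℕ :=
  ∑ p : Finset V × Finset V, ((labelGraph T p.2).neighborSet p.1).ncard ^ 2

theorem starPotential_deleteEdges_sup_edge_lt {T : SimpleGraph (Finset V)}
    {g x f A : Finset V} (hgf : T.Adj g f) (hxf : ¬T.Adj x f) (hxf' : x ≠ f) (hgx : g ≠ x)
    (hg : g ∩ f = A) (hx : x ∩ f = A)
    (hlt : ((labelGraph T A).neighborSet x).ncard + 1 < ((labelGraph T A).neighborSet g).ncard) :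
    starPotential (T.deleteEdges {s(g, f)} ⊔ edge x f) < starPotential T := by
  set T' := T.deleteEdges {s(g, f)} ⊔ edge x f
  have hsup : T' ⊔ edge g f = T ⊔ edge x f := by
    rw [sup_right_comm, deleteEdges_sup_edge_of_adj hgf]
  have hdisj' : Disjoint T' (edge g f) :=
    (disjoint_edge _).mpr (by simp [T', edge_adj, hgx, hgf.ne])
  have hdisj : Disjoint T (edge x f) := (disjoint_edge _).mpr hxf
  have hcount : ∀ v B, ((labelGraph T' B).neighborSet v).ncard +
      (if (v = g ∨ v = f) ∧ g ∩ f = B then 1 else 0) =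
      ((labelGraph T B).neighborSet v).ncard +
      (if (v = x ∨ v = f) ∧ x ∩ f = B then 1 else 0) := by
    intro v B
    have hlabel {F₁ F₂ : SimpleGraph (Finset V)} (h : Disjoint F₁ F₂) :
        Disjoint (labelGraph F₁ B) (labelGraph F₂ B) :=
      (h.mono_left (labelGraph_le _ _)).mono_right (labelGraph_le _ _)
    rw [← ncard_neighborSet_labelGraph_edge hgf.ne, ← ncard_neighborSet_labelGraph_edge hxf',
      ← ncard_neighborSet_sup (hlabel hdisj'), ← ncard_neighborSet_sup (hlabel hdisj),
      ← labelGraph_sup, ← labelGraph_sup, hsup]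
  refine Fintype.sum_lt_sum_of_eq_off_pair (a := (g, A)) (b := (x, A)) (by simp [hgx])
    (fun ⟨v, B⟩ hg' hx' => ?_) ?_
  · have h := hcount v B
    dsimp only
    congr 1
    by_cases hB : B = A
    · subst hB
      have hvg : v ≠ g := by rintro rfl; exact hg' rfl
      have hvx : v ≠ x := by rintro rfl; exact hx' rfl
      simpa [hg, hx, hvg, hvx] using h
    · simpa [hg, hx, Ne.symm hB] using h
  · have h₁ := hcount g A
    have h₂ := hcount x A
    simp [hg, hx, hgx, hgx.symm, hxf', hgf.ne] at h₁ h₂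
    dsimp only
    rw [← h₁] at hlt ⊢
    rw [h₂]
    nlinarith

theorem IsMaxSpanningForest.exists_starPotential_lt {E : Finset (Finset V)}
    {T : SimpleGraph (Finset V)} (hT : IsMaxSpanningForest (wg E) T) {g f A : Finset V}
    (hgf : (labelGraph T A).Adj g f) (hdeg : 2 < ((labelGraph T A).neighborSet g).ncard) :
    ∃ T', IsMaxSpanningForest (wg E) T' ∧ T.deleteEdges {s(g, f)} ≤ T' ∧
      starPotential T' < starPotential T := by
  obtain ⟨⟨hTE, hTacyc, hTreach⟩, hTmax⟩ := hT
  set T₀ := T.deleteEdges {s(g, f)}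
  obtain ⟨h, hgh, hhf⟩ := Set.exists_ne_of_one_lt_ncard
    (s := (labelGraph T A).neighborSet g) (by omega) f
  have hT₀gh : (labelGraph T₀ A).Adj g h :=
    ⟨deleteEdges_adj.mpr ⟨hgh.1, by simp [hhf, hgf.1.ne]⟩, hgh.2⟩
  -- move the edge `gf` to a leaf `x` of the `A`-labelled forest of `T - gf` beyond `h`
  have hacyc : (labelGraph T₀ A).IsAcyclic :=
    hTacyc.anti ((labelGraph_le _ _).trans (deleteEdges_le _))
  obtain ⟨x, z, hgx, hxg, hxz⟩ := hacyc.exists_reachable_neighborSet_eq_singleton hT₀gh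
  have hT₀gx : T₀.Reachable g x := hgx.mono (labelGraph_le _ _)
  have hT₀gf := hTacyc.not_reachable_deleteEdges hgf.1
  have hxf : x ≠ f := by rintro rfl; exact hT₀gf hT₀gx
  have hTxf : ¬T.Adj x f := fun hxf' =>
    hT₀gf (hT₀gx.trans (deleteEdges_adj.mpr ⟨hxf', by simp [hxg, hxf]⟩).reachable)
  have hnbr : (labelGraph T A).neighborSet x = (labelGraph T₀ A).neighborSet x := by
    ext w
    simp [labelGraph, T₀, hxg, hxf]
  have hxz' : (labelGraph T₀ A).Adj x z := show z ∈ _ from hxz ▸ Set.mem_singleton z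
  have hAx : A ⊆ x := hxz'.2 ▸ Finset.inter_subset_left
  have hAf : A ⊆ f := hgf.2 ▸ Finset.inter_subset_right
  have hwg : (wg E).Adj x f := ⟨(hTE hxz'.1.1).1, (hTE hgf.1).2.1, hxf,
    ((hTE hgf.1).2.2.2.mono (hgf.2 ▸ Finset.subset_inter hAx hAf))⟩
  have hT' : IsSpanningForest (wg E) (T₀ ⊔ edge x f) :=
    IsSpanningForest.exchange ⟨hTE, hTacyc, hTreach⟩ hgf.1 hwg hT₀gx .rfl
  have hw : fweight (T₀ ⊔ edge x f) + (g ∩ f).card = fweight T + (x ∩ f).card :=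
    fweight_deleteEdges_sup_edge hgf.1 hTxf hxf
  rw [hgf.2] at hw
  have hmax := hTmax _ hT'
  -- optimality of `T` forces the new edge to be labelled `A` as well
  have hxfA : x ∩ f = A :=
    (Finset.eq_of_subset_of_card_le (Finset.subset_inter hAx hAf) (by omega)).symm
  rw [hxfA] at hw
  refine ⟨T₀ ⊔ edge x f, ⟨hT', fun S hS => (hTmax S hS).trans (by omega)⟩, le_sup_left,
    starPotential_deleteEdges_sup_edge_lt hgf.1 hTxf hxf (Ne.symm hxg) hgf.2 hxfA ?_⟩
  rw [hnbr, hxz, Set.ncard_singleton]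
  omega

theorem exists_isMaxSpanningForest_invariantStar {E E' : Finset (Finset V)}
    {S P : SimpleGraph (Finset V)} (hE : E' ⊆ E) (hS : InvariantStar E S) (hPS : P ≤ S)
    (hP : ∃ T, IsMaxSpanningForest (wg E') T ∧ P ≤ T) :
    ∃ T, IsMaxSpanningForest (wg E') T ∧ P ≤ T ∧ InvariantStar E' T := by
  obtain ⟨T, ⟨hT, hPT⟩, hmin⟩ := Set.exists_min_image
    {T | IsMaxSpanningForest (wg E') T ∧ P ≤ T} starPotential (Set.toFinite _) hP
  refine ⟨T, hT, hPT, fun g hg A hA hAg => ?_⟩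
  by_contra! hdeg
  obtain ⟨f, hgf, hSgf⟩ : ∃ f, (labelGraph T A).Adj g f ∧ ¬S.Adj g f := by
    by_contra! h
    exact (hS g (hE hg) A hA hAg).not_gt
      (hdeg.trans_le (Set.ncard_le_ncard fun f hf => ⟨h f hf, hf.2⟩))
  obtain ⟨T', hT', hle, hlt⟩ := hT.exists_starPotential_lt hgf hdeg
  have hPT' : P ≤ T' := fun u v huv => hle (deleteEdges_adj.mpr
    ⟨hPT huv, fun he => hSgf (hPS (by rw [← mem_edgeSet, ← he]; exact huv))⟩)
  exact (hmin T' ⟨hT', hPT'⟩).not_gt hlt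

theorem deletion_step_general (E : Finset (Finset V)) (e : Finset V)
    (S : SimpleGraph (Finset V)) (hS : IsMaxSpanningForest (wg E) S)
    (hstar : InvariantStar E S)
    (d : ℕ) (hd : d = {f : Finset V | S.Adj e f}.ncard) :
    ∃ S', IsMaxSpanningForest (wg (E.erase e)) S' ∧ InvariantStar (E.erase e) S' ∧
      ((S.edgeSet \ S'.edgeSet) ∪ (S'.edgeSet \ S.edgeSet)).ncard ≤ 2 * d := by
  have hG : wg (E.erase e) ≤ wg E := fun _ _ ⟨hu, hv, hne, hi⟩ =>
    ⟨Finset.mem_of_mem_erase hu, Finset.mem_of_mem_erase hv, hne, hi⟩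
  have hS₀G : S.deleteIncidenceSet e ≤ wg (E.erase e) := fun u v huv => by
    obtain ⟨hSuv, hu, hv⟩ := deleteIncidenceSet_adj.mp huv
    obtain ⟨hu', hv', hne, hi⟩ := hS.1.1 hSuv
    exact ⟨Finset.mem_erase.mpr ⟨hu, hu'⟩, Finset.mem_erase.mpr ⟨hv, hv'⟩, hne, hi⟩
  obtain ⟨T, hT, hS₀T, hTstar⟩ := exists_isMaxSpanningForest_invariantStar
    (Finset.erase_subset e E) hstar (deleteIncidenceSet_le S e)
    (hS.exists_le_of_le hG (deleteIncidenceSet_le S e) hS₀G)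
  refine ⟨T, hT, hTstar, ?_⟩
  have hdeg : (S.edgeSet \ (S.deleteIncidenceSet e).edgeSet).ncard = d := by
    rw [edgeSet_deleteIncidenceSet, sdiff_sdiff_right_self,
      inf_eq_right.mpr (S.incidenceSet_subset e), hd, ← Nat.card_coe_set_eq,
      ← Nat.card_coe_set_eq]
    exact Nat.card_congr (S.incidenceSetEquivNeighborSet e)
  exact hdeg ▸ ncard_symmDiff_edgeSet_le hS.1.2.1 hT.1.2.1
    (fun u v huv => (hS.1.2.2 u v).mpr (hG (hT.1.1 huv)).reachable)
    (deleteIncidenceSet_le S e) hS₀T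

/-- **Deletion step of Theorem 3.2**: after deleting a hyperedge `e` whose degree
in the maintained maximum-weight spanning forest `S` is `d`, there is a
maximum-weight spanning forest of the new hypergraph satisfying Invariant (★)
that differs from `S` by at most `2 * d` edges. -/
theorem deletion_step (E : Finset (Finset V)) (e : Finset V) (he : e ∈ E)
    (S : SimpleGraph (Finset V)) (hS : IsMaxSpanningForest (wg E) S)
    (hstar : InvariantStar E S)
    (d : ℕ) (hd : d = {f : Finset V | S.Adj e f}.ncard) :
    ∃ S', IsMaxSpanningForest (wg (E.erase e)) S' ∧ InvariantStar (E.erase e) S' ∧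
      ((S.edgeSet \ S'.edgeSet) ∪ (S'.edgeSet \ S.edgeSet)).ncard ≤ 2 * d :=
  deletion_step_general E e S hS hstar d hd
end
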